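/- At an optimal solution of the joint assortment and pricing problem under the Threshold Luce model, net utilities are nonincreasing in the product index: u_i − p*_i ≥ u_{i+1} − p*_{i+1} for consecutive offered products i and i+1 (products indexed by decreasing intrinsic utility). -/

import Mathlib

/-!
Write `r` for the optimal revenue. Since `R(S, q) ≤ r` iff `∑ₖ (qₖ - r) e^{uₖ - qₖ} ≤ r a₀`,
optimality of `p*` says that `p*` maximizes this separable surplus over valid prices.
If `u_j < u_i` while product `j` had the larger net utility, exchanging the two net utilities
keeps the prices valid and raises the surplus by `(u_i - u_j)(e^{u_j - p_j} - e^{u_i - p_i}) > 0`.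
If `u_i = u_j`, either price may move within `[p_j, p_i]` without breaking validity, so both
endpoints maximize `x ↦ (x - r) e^{u_i - x}` on that interval; this function is unimodal with
peak at `r + 1`, which forces `p_i ≤ p_j`.
-/

open Real Set Function Equiv

lemma le_of_isMaxOn_Icc_left_right {α β : Type*} [LinearOrder α] [Preorder β] {f : α → β}
    {m a b : α} (hmono : StrictMonoOn f (Iic m)) (hanti : StrictAntiOn f (Ici m))
    (ha : IsMaxOn f (Icc a b) a) (hb : IsMaxOn f (Icc a b) b) : b ≤ a := by
  by_contra! hab
  rcases le_or_gt b m with hbm | hmb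
  · exact (hmono (hab.le.trans hbm : a ≤ m) hbm hab).not_ge (ha ⟨hab.le, le_rfl⟩)
  rcases le_or_gt m a with hma | ham
  · exact (hanti hma (hma.trans hab.le) hab).not_ge (hb ⟨le_rfl, hab.le⟩)
  · exact (hmono ham.le le_rfl ham).not_ge (ha ⟨ham.le, hmb.le⟩)

lemma hasDerivAt_sub_mul_exp_sub (r c x : ℝ) :
    HasDerivAt (fun y => (y - r) * exp (c - y)) ((1 + r - x) * exp (c - x)) x := by
  refine (((hasDerivAt_id' x).sub_const r).mul ((hasDerivAt_id' x).const_sub c).exp).congr_deriv ?_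
  ring

lemma strictMonoOn_sub_mul_exp_sub (r c : ℝ) :
    StrictMonoOn (fun x => (x - r) * exp (c - x)) (Iic (r + 1)) := by
  refine strictMonoOn_of_deriv_pos (convex_Iic _) (by fun_prop) fun x hx => ?_
  rw [interior_Iic, mem_Iio] at hx
  rw [(hasDerivAt_sub_mul_exp_sub r c x).deriv]
  exact mul_pos (by linarith) (exp_pos _)

lemma strictAntiOn_sub_mul_exp_sub (r c : ℝ) :
    StrictAntiOn (fun x => (x - r) * exp (c - x)) (Ici (r + 1)) := by
  refine strictAntiOn_of_deriv_neg (convex_Ici _) (by fun_prop) fun x hx => ?_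
  rw [interior_Ici, mem_Ioi] at hx
  rw [(hasDerivAt_sub_mul_exp_sub r c x).deriv]
  exact mul_neg_of_neg_of_pos (by linarith) (exp_pos _)

namespace ThresholdLuce

variable {ι : Type*}

noncomputable def revenue (u : ι → ℝ) (a0 : ℝ) (S : Finset ι) (q : ι → ℝ) : ℝ :=
  (∑ k ∈ S, q k * exp (u k - q k)) / ((∑ k ∈ S, exp (u k - q k)) + a0)

/-- Encodes `c(S, q) = S`: no offered product falls below the threshold. -/
def Valid (u : ι → ℝ) (t : ℝ) (S : Finset ι) (q : ι → ℝ) : Prop :=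
  ∀ j ∈ S, ∀ i ∈ S, exp (u i - q i) ≤ (1 + t) * exp (u j - q j)

/-- `revenue u a0 S q ≤ r` iff `surplus u r S q ≤ r * a0` (see `surplus_eq`): against a fixed
revenue level the fractional objective becomes a sum of one-product terms. -/
noncomputable def surplus (u : ι → ℝ) (r : ℝ) (S : Finset ι) (q : ι → ℝ) : ℝ :=
  ∑ k ∈ S, (q k - r) * exp (u k - q k)

/-- Prices giving products `i` and `j` each other's net utility. -/
def netSwap [DecidableEq ι] (u p : ι → ℝ) (i j : ι) (k : ι) : ℝ :=
  p (swap i j k) + u k - u (swap i j k)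

section

variable {u : ι → ℝ} {a0 r t : ℝ} {S : Finset ι} {p q : ι → ℝ}

lemma surplus_eq (ha0 : 0 < a0) :
    surplus u r S q = (revenue u a0 S q - r) * ((∑ k ∈ S, exp (u k - q k)) + a0) + r * a0 := by
  have hD : (∑ k ∈ S, exp (u k - q k)) + a0 ≠ 0 := by positivity
  simp only [surplus, revenue, sub_mul, Finset.sum_sub_distrib, ← Finset.mul_sum,
    div_mul_cancel₀ _ hD]
  ring

lemma surplus_le_of_revenue_le (ha0 : 0 < a0) {T : Finset ι}
    (h : revenue u a0 T q ≤ revenue u a0 S p) :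
    surplus u (revenue u a0 S p) T q ≤ surplus u (revenue u a0 S p) S p := by
  rw [surplus_eq (a0 := a0) ha0, surplus_eq (a0 := a0) ha0, sub_self, zero_mul, zero_add]
  have hD : 0 ≤ (∑ k ∈ T, exp (u k - q k)) + a0 := by positivity
  linarith [mul_nonpos_of_nonpos_of_nonneg (sub_nonpos.2 h) hD]

lemma sub_surplus_update [DecidableEq ι] {m : ι} (hm : m ∈ S) (x : ℝ) :
    surplus u r S (update p m x) - surplus u r S p =
      (x - r) * exp (u m - x) - (p m - r) * exp (u m - p m) := by
  rw [surplus, surplus, ← Finset.sum_sub_distrib, Finset.sum_eq_single_of_mem m hm,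
    update_self]
  intro k _ hk
  rw [update_of_ne hk, sub_self]

lemma sub_surplus_netSwap [DecidableEq ι] {i j : ι} (hi : i ∈ S) (hj : j ∈ S) (hij : i ≠ j) :
    surplus u r S (netSwap u p i j) - surplus u r S p =
      (u i - u j) * (exp (u j - p j) - exp (u i - p i)) := by
  rw [surplus, surplus, ← Finset.sum_sub_distrib, Finset.sum_eq_add_of_mem i j hi hj hij]
  · simp only [netSwap, swap_apply_left, swap_apply_right]
    rw [show u i - (p j + u i - u j) = u j - p j by ring,
      show u j - (p i + u j - u i) = u i - p i by ring]
    ring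
  · rintro k - ⟨hki, hkj⟩
    simp only [netSwap, swap_apply_of_ne_of_ne hki hkj, add_sub_cancel_right, sub_self]

lemma Valid.netSwap [DecidableEq ι] {i j : ι} (h : Valid u t S p) (hi : i ∈ S) (hj : j ∈ S) :
    Valid u t S (netSwap u p i j) := by
  have hw : ∀ k, u k - ThresholdLuce.netSwap u p i j k = u (swap i j k) - p (swap i j k) := by
    intro k; simp only [ThresholdLuce.netSwap]; ring
  have hmem : ∀ k ∈ S, swap i j k ∈ S := fun k hk => by
    rcases eq_or_ne k i with rfl | hki
    · rwa [swap_apply_left]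
    rcases eq_or_ne k j with rfl | hkj
    · rwa [swap_apply_right]
    rwa [swap_apply_of_ne_of_ne hki hkj]
  intro k hk l hl
  rw [hw, hw]
  exact h _ (hmem k hk) _ (hmem l hl)

lemma Valid.update [DecidableEq ι] {a b m : ι} {x : ℝ} (h : Valid u t S p) (ha : a ∈ S)
    (hb : b ∈ S) (hlo : u b - p b ≤ u m - x) (hhi : u m - x ≤ u a - p a) :
    Valid u t S (update p m x) := by
  have hw_lo := exp_le_exp.2 hlo
  have hw_hi := exp_le_exp.2 hhi
  have ht : 0 ≤ 1 + t := by nlinarith [h b hb b hb, exp_pos (u b - p b)]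
  have hw_lo_t := mul_le_mul_of_nonneg_left hw_lo ht
  intro j hj i hi
  by_cases him : i = m <;> by_cases hjm : j = m
  · rw [him, hjm, update_self]; linarith [h b hb a ha]
  · rw [him, update_self, update_of_ne hjm]; linarith [h j hj a ha]
  · rw [hjm, update_self, update_of_ne him]; linarith [h b hb i hi]
  · rw [update_of_ne him, update_of_ne hjm]; exact h j hj i hi

end

section

variable {u : ι → ℝ} {r t : ℝ} {S : Finset ι} {p : ι → ℝ} [DecidableEq ι] {i j : ι}

lemma netUtility_le_of_utility_lt (hp : Valid u t S p)
    (hopt : ∀ q, Valid u t S q → surplus u r S q ≤ surplus u r S p)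
    (hi : i ∈ S) (hj : j ∈ S) (hu : u j < u i) : u j - p j ≤ u i - p i := by
  by_contra! hlt
  have hij : i ≠ j := by rintro rfl; exact hu.false
  have hgain := sub_surplus_netSwap (u := u) (r := r) (p := p) hi hj hij
  have hpos : 0 < (u i - u j) * (exp (u j - p j) - exp (u i - p i)) :=
    mul_pos (sub_pos.2 hu) (sub_pos.2 (exp_lt_exp.2 hlt))
  linarith [hopt _ (hp.netSwap hi hj)]

lemma netUtility_le_of_utility_eq (hp : Valid u t S p)
    (hopt : ∀ q, Valid u t S q → surplus u r S q ≤ surplus u r S p)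
    (hi : i ∈ S) (hj : j ∈ S) (hu : u j = u i) : u j - p j ≤ u i - p i := by
  suffices p i ≤ p j by linarith
  have hmax : ∀ m ∈ S, u m = u i →
      IsMaxOn (fun x => (x - r) * exp (u i - x)) (Icc (p j) (p i)) (p m) := by
    rintro m hm hum x ⟨hjx, hxi⟩
    have hv := hp.update (m := m) (x := x) hj hi (by linarith) (by linarith)
    have hdiff := sub_surplus_update (u := u) (r := r) (p := p) hm x
    rw [mem_ofPred_eq, ← hum]
    linarith [hopt _ hv]
  exact le_of_isMaxOn_Icc_left_right (strictMonoOn_sub_mul_exp_sub r (u i))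
    (strictAntiOn_sub_mul_exp_sub r (u i)) (hmax j hj hu) (hmax i hi rfl)

end

end ThresholdLuce

open ThresholdLuce

theorem optimal_net_utilities_nonincreasing_general {n : ℕ}
    (u : Fin n → ℝ) (a0 t : ℝ) (ha0 : 0 < a0)
    (hsort : ∀ i j : Fin n, i ≤ j → u j ≤ u i) :
    let R : Finset (Fin n) → (Fin n → ℝ) → ℝ := fun A q =>
      (∑ k ∈ A, q k * Real.exp (u k - q k)) /
        ((∑ k ∈ A, Real.exp (u k - q k)) + a0)
    let valid : Finset (Fin n) → (Fin n → ℝ) → Prop := fun A q =>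
      ∀ j ∈ A, ∀ i ∈ A, Real.exp (u i - q i) ≤ (1 + t) * Real.exp (u j - q j)
    ∀ (Sstar : Finset (Fin n)) (pstar : Fin n → ℝ), valid Sstar pstar →
      (∀ S q, valid S q → R S q ≤ R Sstar pstar) →
      ∀ i ∈ Sstar, ∀ j ∈ Sstar, i ≤ j → u j - pstar j ≤ u i - pstar i := by
  intro R valid Sstar pstar hvalid hopt i hi j hj hij
  have hsurplus : ∀ q, Valid u t Sstar q → surplus u (revenue u a0 Sstar pstar) Sstar q ≤
      surplus u (revenue u a0 Sstar pstar) Sstar pstar :=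
    fun q hq => surplus_le_of_revenue_le ha0 (hopt Sstar q hq)
  rcases (hsort i j hij).lt_or_eq with hu | hu
  · exact netUtility_le_of_utility_lt hvalid hsurplus hi hj hu
  · exact netUtility_le_of_utility_eq hvalid hsurplus hi hj hu

/-- At an optimal solution of the joint assortment and pricing problem under the
Threshold Luce model, net utilities `uᵢ − pᵢ` are nonincreasing in the product index
among offered products (products indexed by decreasing intrinsic utility). -/
theorem optimal_net_utilities_nonincreasing {n : ℕ}
    (u : Fin n → ℝ) (a0 t : ℝ) (ha0 : 0 < a0) (ht : 0 < t)
    (hsort : ∀ i j : Fin n, i ≤ j → u j ≤ u i) :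
    let R : Finset (Fin n) → (Fin n → ℝ) → ℝ := fun A q =>
      (∑ k ∈ A, q k * Real.exp (u k - q k)) /
        ((∑ k ∈ A, Real.exp (u k - q k)) + a0)
    let valid : Finset (Fin n) → (Fin n → ℝ) → Prop := fun A q =>
      ∀ j ∈ A, ∀ i ∈ A, Real.exp (u i - q i) ≤ (1 + t) * Real.exp (u j - q j)
    ∀ (Sstar : Finset (Fin n)) (pstar : Fin n → ℝ), valid Sstar pstar →
      (∀ S q, valid S q → R S q ≤ R Sstar pstar) →
      ∀ i ∈ Sstar, ∀ j ∈ Sstar, i ≤ j → u j - pstar j ≤ u i - pstar i :=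
  optimal_net_utilities_nonincreasing_general u a0 t ha0 hsort
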